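/- Let s ≥ 1 be an integer, let G be an H_s-free graph with clique number ω, and let 𝓛 = (L_0, L_1, …, L_k) be an optimal s-template in G. Then there are at most 14^{s+2}·ω^{s²+9s+14} vertices of N(𝓛) that are pendant with respect to 𝓛. -/

import Mathlib

open SimpleGraph Set

/-- `G` contains no induced subgraph isomorphic to `H`. -/
def IsInducedFree {V : Type*} {W : Type*} (G : SimpleGraph V) (H : SimpleGraph W) : Prop :=
  ∀ s : Set V, ¬ Nonempty ((G.induce s) ≃g H)

/-- The double star `H_s`: two adjacent internal vertices `0` and `1`; `0` is adjacent to the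
`s` leaves `2,…,s+1` and `1` is adjacent to the `s` leaves `s+2,…,2s+1`. -/
def doubleStarGraph (s : ℕ) : SimpleGraph (Fin (2*s+2)) :=
  SimpleGraph.fromRel (fun a b =>
    ((a : ℕ) = 0 ∧ (b : ℕ) = 1) ∨
    ((a : ℕ) = 0 ∧ 2 ≤ (b : ℕ) ∧ (b : ℕ) ≤ s+1) ∨
    ((a : ℕ) = 1 ∧ s+2 ≤ (b : ℕ)))

/-- A graph has degeneracy at most `d` if every nonempty subgraph has a vertex whose degree
in that subgraph is at most `d`. -/
def DegeneracyAtMost {V : Type*} (G : SimpleGraph V) (d : ℕ) : Prop :=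
  ∀ H : G.Subgraph, H.verts.Nonempty → ∃ v ∈ H.verts, (H.neighborSet v).ncard ≤ d

/-- A `(k,d)`-colouring: a partition of the vertex set into `k` parts, each inducing a
subgraph of degeneracy at most `d`. -/
def KDColorable {V : Type*} (G : SimpleGraph V) (k d : ℕ) : Prop :=
  ∃ f : V → Fin k, ∀ i : Fin k, DegeneracyAtMost (G.induce {v | f v = i}) d

/-- `G` contains the complete bipartite graph `K_{t,t}` as a (not necessarily induced)
subgraph. -/
def ContainsKtt {V : Type*} (G : SimpleGraph V) (t : ℕ) : Prop :=
  ∃ A B : Finset V, A.card = t ∧ B.card = t ∧ Disjoint A B ∧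
    ∀ a ∈ A, ∀ b ∈ B, G.Adj a b

/-- A set of vertices is stable (independent) if no two of its members are adjacent. -/
def IsStableSet {V : Type*} (G : SimpleGraph V) (S : Set V) : Prop :=
  ∀ a ∈ S, ∀ b ∈ S, a ≠ b → ¬ G.Adj a b

/-- An `s`-template in `G`: a clique `L0` complete to all the `L i`, pairwise disjoint sets
`L 1, …, L k` (here indexed by `Fin k`) whose sizes lie between `ω^{s+5}` and `14 ω^{s+6}`,
such that each vertex of `L i` has at most `ω^{s+3}` non-neighbours in each other `L j`. -/
def IsTemplate {V : Type*} (G : SimpleGraph V) (s : ℕ) (L0 : Set V) {k : ℕ}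
    (L : Fin k → Set V) : Prop :=
  (∀ i : Fin k, Disjoint L0 (L i)) ∧
  (Pairwise fun i j : Fin k => Disjoint (L i) (L j)) ∧
  G.IsClique L0 ∧
  (∀ u ∈ L0, ∀ i : Fin k, ∀ v ∈ L i, G.Adj u v) ∧
  (∀ i : Fin k, G.cliqueNum ^ (s+5) ≤ (L i).ncard ∧ (L i).ncard ≤ 14 * G.cliqueNum ^ (s+6)) ∧
  (∀ i j : Fin k, i ≠ j → ∀ v ∈ L i,
    ({u ∈ L j | ¬ G.Adj v u}).ncard ≤ G.cliqueNum ^ (s+3))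

/-- The value of an `s`-template. -/
noncomputable def templateValue {V : Type*} (G : SimpleGraph V) (s : ℕ) (L0 : Set V) {k : ℕ}
    (L : Fin k → Set V) : ℕ :=
  (⋃ i, L i).ncard + 7 * G.cliqueNum ^ (s+5) * L0.ncard + k * G.cliqueNum ^ (s+5)

/-- An optimal `s`-template: one of maximum value among all `s`-templates in `G`. -/
def IsOptimalTemplate {V : Type*} (G : SimpleGraph V) (s : ℕ) (L0 : Set V) {k : ℕ}
    (L : Fin k → Set V) : Prop :=
  IsTemplate G s L0 L ∧
  ∀ (k' : ℕ) (L0' : Set V) (L' : Fin k' → Set V), IsTemplate G s L0' L' →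
    templateValue G s L0' L' ≤ templateValue G s L0 L

/-- `V(𝓛)`, the vertex set of a template. -/
def templateVerts {V : Type*} (L0 : Set V) {k : ℕ} (L : Fin k → Set V) : Set V :=
  L0 ∪ ⋃ i, L i

/-- `N(𝓛)`: the vertices outside `V(𝓛)` with a neighbour in `L 1 ∪ ⋯ ∪ L k`. -/
def templateNbhd {V : Type*} (G : SimpleGraph V) (L0 : Set V) {k : ℕ}
    (L : Fin k → Set V) : Set V :=
  {v | v ∉ templateVerts L0 L ∧ ∃ i : Fin k, ∃ u ∈ L i, G.Adj v u}


/-- A vertex `v` is pendant with respect to the template: there are distinct `i, j`, a vertex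
`u ∈ L j` and a stable set `S ⊆ L i` of `s+1` common neighbours of `u` such that `v` is not
adjacent to `u` and `v` has exactly one neighbour in `S`. -/
def TemplatePendant {V : Type*} (G : SimpleGraph V) (s : ℕ) {k : ℕ}
    (L : Fin k → Set V) (v : V) : Prop :=
  ∃ i j : Fin k, i ≠ j ∧ ∃ u ∈ L j, ∃ S : Set V, S ⊆ L i ∧ S.ncard = s + 1 ∧
    IsStableSet G S ∧ (∀ w ∈ S, G.Adj u w) ∧ ¬ G.Adj v u ∧ ({w ∈ S | G.Adj v w}).ncard = 1

/-- A vertex `v` is dense with respect to the template: there are `j` and `u ∈ L j` such that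
for all `i ≠ j`, fewer than `ω^{s+2}/14` vertices of `L i` are adjacent to `u` and not to `v`. -/
def TemplateDense {V : Type*} (G : SimpleGraph V) (s : ℕ) {k : ℕ}
    (L : Fin k → Set V) (v : V) : Prop :=
  ∃ j : Fin k, ∃ u ∈ L j, ∀ i : Fin k, i ≠ j →
    14 * ({w ∈ L i | G.Adj u w ∧ ¬ G.Adj v w}).ncard < G.cliqueNum ^ (s+2)

/-- A vertex `v` is pure with respect to the template: it has no neighbour in at least two of
the sets `L i`, and for each `i`, either it has no neighbour in `L i` or it has at most
`ω^{s+2}/7` non-neighbours in `L i`. -/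
def TemplatePure {V : Type*} (G : SimpleGraph V) (s : ℕ) {k : ℕ}
    (L : Fin k → Set V) (v : V) : Prop :=
  (∃ i₁ i₂ : Fin k, i₁ ≠ i₂ ∧ (∀ w ∈ L i₁, ¬ G.Adj v w) ∧ (∀ w ∈ L i₂, ¬ G.Adj v w)) ∧
  (∀ i : Fin k, (∀ w ∈ L i, ¬ G.Adj v w) ∨
    7 * ({w ∈ L i | ¬ G.Adj v w}).ncard ≤ G.cliqueNum ^ (s+2))

/-- `M_I`: the pure vertices `v` (with respect to the template) whose set `I_v` of indices `i`
such that `v` has a neighbour in `L i` equals `I`. -/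
def templatePart {V : Type*} (G : SimpleGraph V) (s : ℕ) (L0 : Set V) {k : ℕ}
    (L : Fin k → Set V) (I : Set (Fin k)) : Set V :=
  {v | v ∈ templateNbhd G L0 L ∧ TemplatePure G s L v ∧
    ∀ i : Fin k, (∃ u ∈ L i, G.Adj v u) ↔ i ∈ I}

/-- Two disjoint sets `A, B` are `s`-crowded if there is no stable set meeting each of them
in exactly `s` vertices. -/
def SCrowded {V : Type*} (G : SimpleGraph V) (s : ℕ) (A B : Set V) : Prop :=
  ¬ ∃ X : Set V, IsStableSet G X ∧ (X ∩ A).ncard = s ∧ (X ∩ B).ncard = s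

/-- `c` satisfies the Kővári–Sós–Turán-type bound for `H_s`: every `H_s`-free graph either
contains `K_{t,t}` as a subgraph or has degeneracy less than `t^c`. -/
def KSTBound (s c : ℕ) : Prop :=
  ∀ (W : Type) [Fintype W], ∀ G' : SimpleGraph W, IsInducedFree G' (doubleStarGraph s) →
    ∀ t : ℕ, ContainsKtt G' t ∨ ∃ D : ℕ, D < t ^ c ∧ DegeneracyAtMost G' D

/-- `Z(𝓛)`: the union of `L0` with the set of vertices of `N(𝓛)` having at most `ω^{s+2}/4`
non-neighbours in each `L i`. -/
def templateZ {V : Type*} (G : SimpleGraph V) (s : ℕ) (L0 : Set V) {k : ℕ}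
    (L : Fin k → Set V) : Set V :=
  L0 ∪ {v ∈ templateNbhd G L0 L |
    ∀ i : Fin k, 4 * ({u ∈ L i | ¬ G.Adj v u}).ncard ≤ G.cliqueNum ^ (s+2)}

/-- `Y(𝓛) = (V(𝓛) ∪ N(𝓛)) \ Z(𝓛)`. -/
def templateY {V : Type*} (G : SimpleGraph V) (s : ℕ) (L0 : Set V) {k : ℕ}
    (L : Fin k → Set V) : Set V :=
  (templateVerts L0 L ∪ templateNbhd G L0 L) \ templateZ G s L0 L

/-- `N_A(𝓛)`: the vertices of `A \ V(𝓛)` with a neighbour in `L 1 ∪ ⋯ ∪ L k`. -/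
def templateNbhdIn {V : Type*} (G : SimpleGraph V) (A : Set V) (L0 : Set V) {k : ℕ}
    (L : Fin k → Set V) : Set V :=
  {v ∈ A | v ∉ templateVerts L0 L ∧ ∃ i : Fin k, ∃ u ∈ L i, G.Adj v u}

/-- `Z_A(𝓛)`: the union of `L0` with the set of vertices of `A \ V(𝓛)` having at most
`ω^{s+2}/4` non-neighbours in each `L i`. -/
def templateZIn {V : Type*} (G : SimpleGraph V) (s : ℕ) (A : Set V) (L0 : Set V) {k : ℕ}
    (L : Fin k → Set V) : Set V :=
  L0 ∪ {v ∈ A | v ∉ templateVerts L0 L ∧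
    ∀ i : Fin k, 4 * ({u ∈ L i | ¬ G.Adj v u}).ncard ≤ G.cliqueNum ^ (s+2)}

/-- `Y_A(𝓛) = (V(𝓛) ∪ N_A(𝓛)) \ Z_A(𝓛)`. -/
def templateYIn {V : Type*} (G : SimpleGraph V) (s : ℕ) (A : Set V) (L0 : Set V) {k : ℕ}
    (L : Fin k → Set V) : Set V :=
  (templateVerts L0 L ∪ templateNbhdIn G A L0 L) \ templateZIn G s A L0 L

/-! Every pendant vertex `v` has a frame `(u, w, E)`: a vertex `u ∈ L j` and a stable set
`S = {w} ∪ E ⊆ L i` of `s + 1` neighbours of `u` in which `w` is the only neighbour of `v`.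
With `M = 14 ω^{s+6}` there are at most `k² M^{s+2}` frames, and `k ≤ ω` since a template with
more than `ω` parts yields, greedily, a clique with one vertex in each of `ω + 1` parts.
The vertices pendant to a fixed frame contain no stable set of size `s`: with `u`, `w` and `E`
it would induce `H_s`. By the Ramsey-type bound `|A| < ω^s` for vertex sets without stable
`s`-sets, each frame carries fewer than `ω^s` pendant vertices, and
`ω^s · ω² · M^{s+2} = 14^{s+2} ω^{s²+9s+14}`. -/

open scoped Finset

/-- `inl 0` and `inl 1` are the two centres of `H_s`, `inr (inl r)` and `inr (inr r)` are the
leaves at `inl 0` and at `inl 1`. -/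
def doubleStarEquiv (s : ℕ) : Fin 2 ⊕ (Fin s ⊕ Fin s) ≃ Fin (2 * s + 2) :=
  (Equiv.sumCongr (Equiv.refl _) finSumFinEquiv).trans
    (finSumFinEquiv.trans (finCongr (by omega)))

@[simp] lemma doubleStarEquiv_inl (s : ℕ) (i : Fin 2) :
    (doubleStarEquiv s (.inl i) : ℕ) = i := rfl
@[simp] lemma doubleStarEquiv_inr_inl (s : ℕ) (r : Fin s) :
    (doubleStarEquiv s (.inr (.inl r)) : ℕ) = 2 + r := rfl
@[simp] lemma doubleStarEquiv_inr_inr (s : ℕ) (r : Fin s) :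
    (doubleStarEquiv s (.inr (.inr r)) : ℕ) = 2 + (s + r) := rfl

section

variable {V : Type*} {G : SimpleGraph V}

lemma IsInducedFree.not_isIndContained {W : Type*} {H : SimpleGraph W}
    (hG : IsInducedFree G H) : ¬ H ⊴ G := fun h =>
  let ⟨S, ⟨e⟩⟩ := isIndContained_iff_exists_iso_induce.1 h
  hG S ⟨e.symm⟩

lemma doubleStarGraph_isIndContained {s : ℕ} {u w : V} {x y : Fin s → V}
    (hx : Function.Injective x) (hy : Function.Injective y)
    (huw : G.Adj u w) (hux : ∀ r, G.Adj u (x r)) (hwy : ∀ r, G.Adj w (y r))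
    (hwx : ∀ r, ¬ G.Adj w (x r)) (huy : ∀ r, ¬ G.Adj u (y r))
    (hxx : ∀ r r', ¬ G.Adj (x r) (x r')) (hyy : ∀ r r', ¬ G.Adj (y r) (y r'))
    (hxy : ∀ r r', ¬ G.Adj (x r) (y r')) (hwx_ne : ∀ r, w ≠ x r) (huy_ne : ∀ r, u ≠ y r) :
    doubleStarGraph s ⊴ G := by
  set f : Fin 2 ⊕ (Fin s ⊕ Fin s) → V := Sum.elim ![u, w] (Sum.elim x y)
  have hf : Function.Injective f := by
    refine Function.Injective.sumElim ?_ (hx.sumElim hy fun r r' h => hwx r (h ▸ hwy r')) ?_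
    · intro i j h
      fin_cases i <;> fin_cases j <;> simp_all [huw.ne, huw.ne.symm]
    · rintro i (r | r) <;> fin_cases i
      exacts [(hux r).ne, hwx_ne r, huy_ne r, (hwy r).ne]
  have hadj : ∀ p q, (doubleStarGraph s).Adj (doubleStarEquiv s p) (doubleStarEquiv s q) ↔
      G.Adj (f p) (f q) := by
    intro p q
    rcases p with p | p | p <;> rcases q with q | q | q <;>
      simp only [doubleStarGraph, fromRel_adj, ne_eq, ← Fin.val_inj, doubleStarEquiv_inl,
        doubleStarEquiv_inr_inl, doubleStarEquiv_inr_inr, f, Sum.elim_inl, Sum.elim_inr] <;>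
      (try fin_cases p) <;> (try fin_cases q) <;>
      (try simp only [Fin.zero_eta, Fin.mk_one, Fin.isValue, Matrix.cons_val_zero,
        Matrix.cons_val_one, Matrix.cons_val_fin_one]) <;>
      grind [SimpleGraph.adj_symm, SimpleGraph.irrefl]
  exact ⟨⟨(doubleStarEquiv s).symm.toEmbedding.trans ⟨f, hf⟩, fun {a b} => by
    simpa using (hadj ((doubleStarEquiv s).symm a) ((doubleStarEquiv s).symm b)).symm⟩⟩

lemma IsStableSet.insert_of_not_adj {S : Set V} {v : V} (hS : IsStableSet G S)
    (hv : ∀ x ∈ S, ¬ G.Adj v x) : IsStableSet G (insert v S) := by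
  rintro a (rfl | ha) b (rfl | hb) hab
  exacts [absurd rfl hab, hv b hb, fun h => hv a ha h.symm, hS a ha b hb hab]

lemma card_eq_card_nonadj_add_card_adj [DecidableEq V]
    [DecidableRel G.Adj] {A : Finset V} {v : V} (hv : v ∈ A) :
    #A = #{x ∈ A.erase v | ¬ G.Adj v x} + #{x ∈ A.erase v | G.Adj v x} + 1 := by
  rw [add_comm #{x ∈ A.erase v | ¬ G.Adj v x}, Finset.card_filter_add_card_filter_not,
    Finset.card_erase_add_one hv]

lemma isStableSet_card_lt_of_subset_nonadj [DecidableEq V] [DecidableRel G.Adj] {A : Finset V}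
    {v : V} {s : ℕ} (hv : v ∈ A) (hst : ∀ T ⊆ A, IsStableSet G T → #T < s + 1) :
    ∀ T ⊆ {x ∈ A.erase v | ¬ G.Adj v x}, IsStableSet G T → #T < s := by
  intro T hT hTst
  have hvT : v ∉ T := fun h => by simpa using hT h
  have hsub : insert v T ⊆ A := Finset.insert_subset hv fun _ hx =>
    Finset.mem_of_mem_erase (Finset.mem_filter.1 (hT hx)).1
  have := hst _ hsub <| by
    rw [Finset.coe_insert]
    exact hTst.insert_of_not_adj fun x hx => (Finset.mem_filter.1 (hT hx)).2
  rwa [Finset.card_insert_of_notMem hvT, Nat.add_lt_add_iff_right] at this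

lemma isClique_card_add_one_le_of_subset_adj [DecidableEq V] [DecidableRel G.Adj] {A : Finset V}
    {v : V} {m : ℕ} (hv : v ∈ A) (hcl : ∀ C ⊆ A, G.IsClique (C : Set V) → #C ≤ m) :
    ∀ C ⊆ {x ∈ A.erase v | G.Adj v x}, G.IsClique (C : Set V) → #C + 1 ≤ m := by
  intro C hC hCcl
  have hvC : v ∉ C := fun h => by simpa using hC h
  have hsub : insert v C ⊆ A := Finset.insert_subset hv fun _ hx =>
    Finset.mem_of_mem_erase (Finset.mem_filter.1 (hC hx)).1
  have := hcl _ hsub <| by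
    rw [Finset.coe_insert]
    exact hCcl.insert fun x hx _ => (Finset.mem_filter.1 (hC hx)).2
  rwa [Finset.card_insert_of_notMem hvC] at this

theorem card_lt_pow_of_isStableSet_of_isClique {s m : ℕ} (hm : 2 ≤ m) {A : Finset V}
    (hst : ∀ T ⊆ A, IsStableSet G T → #T < s)
    (hcl : ∀ C ⊆ A, G.IsClique (C : Set V) → #C ≤ m) : #A < m ^ s := by
  classical
  induction s generalizing m A with
  | zero => exact absurd (hst ∅ (by simp) (by simp [IsStableSet])) (by simp)
  | succ s ihs =>
    induction m, hm using Nat.le_induction generalizing A with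
    | base =>
      obtain rfl | ⟨v, hv⟩ := A.eq_empty_or_nonempty
      · simp
      have h₁ := ihs le_rfl (isStableSet_card_lt_of_subset_nonadj hv hst) fun C hC =>
        hcl C (hC.trans ((Finset.filter_subset _ _).trans (Finset.erase_subset _ _)))
      have hstable : IsStableSet G ↑({x ∈ A.erase v | G.Adj v x} : Finset V) :=
        fun a ha b hb hab hadj => by
          have := isClique_card_add_one_le_of_subset_adj hv hcl {a, b}
            (Finset.insert_subset ha (Finset.singleton_subset_iff.2 hb))
            (by rw [Finset.coe_pair]; exact isClique_pair.2 fun _ => hadj)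
          rw [Finset.card_pair hab] at this
          omega
      have h₂ := hst _ ((Finset.filter_subset _ _).trans (Finset.erase_subset _ _)) hstable
      have : s < 2 ^ s := Nat.lt_two_pow_self
      rw [card_eq_card_nonadj_add_card_adj (G := G) hv, pow_succ]
      omega
    | succ m hm ihm =>
      obtain rfl | ⟨v, hv⟩ := A.eq_empty_or_nonempty
      · simp
      have h₁ := ihs (by omega) (isStableSet_card_lt_of_subset_nonadj hv hst) fun C hC =>
        hcl C (hC.trans ((Finset.filter_subset _ _).trans (Finset.erase_subset _ _)))
      have h₂ := ihm (fun T hT => hst T (hT.trans ((Finset.filter_subset _ _).trans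
        (Finset.erase_subset _ _)))) fun C hC hCcl =>
          Nat.le_of_add_le_add_right (isClique_card_add_one_le_of_subset_adj hv hcl C hC hCcl)
      have : m ^ (s + 1) ≤ m * (m + 1) ^ s := by
        rw [pow_succ']; exact Nat.mul_le_mul_left _ (Nat.pow_le_pow_left (by omega) _)
      rw [card_eq_card_nonadj_add_card_adj (G := G) hv, pow_succ']
      nlinarith

lemma exists_adj_transversal {d : ℕ} :
    ∀ {n : ℕ} (L : Fin n → Set V),
      (∀ i j, i ≠ j → ∀ v ∈ L i, {u ∈ L j | ¬ G.Adj v u}.ncard ≤ d) →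
      (∀ i, (n - 1) * d < (L i).ncard) →
      ∃ g : Fin n → V, (∀ i, g i ∈ L i) ∧ Pairwise fun i j => G.Adj (g i) (g j)
  | 0, _, _, _ => ⟨Fin.elim0, Fin.rec0, fun i => i.elim0⟩
  | n + 1, L, hnon, hbig => by
    obtain ⟨g, hgL, hgadj⟩ := exists_adj_transversal (L ∘ Fin.castSucc)
      (fun i j hij => hnon _ _ (Fin.castSucc_injective _ |>.ne hij))
      (fun i => lt_of_le_of_lt (Nat.mul_le_mul_right _ (by omega)) (hbig _))
    set bad := ⋃ r, {u ∈ L (Fin.last n) | ¬ G.Adj (g r) u}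
    have hbad : bad.ncard < (L (Fin.last n)).ncard := by
      refine lt_of_le_of_lt ((Set.ncard_iUnion_le_of_fintype _).trans ?_) (hbig _)
      simpa using Finset.sum_le_card_nsmul Finset.univ _ d fun r _ =>
        hnon _ _ (Fin.castSucc_lt_last r).ne (g r) (hgL r)
    obtain ⟨v, hvL, hvbad⟩ := Set.exists_mem_notMem_of_ncard_lt_ncard hbad <|
      (Set.finite_of_ncard_pos (by omega)).subset (Set.iUnion_subset fun _ => Set.sep_subset _ _)
    have hgv : ∀ r, G.Adj (g r) v := fun r => by
      by_contra h
      exact hvbad (Set.mem_iUnion.2 ⟨r, hvL, h⟩)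
    refine ⟨Fin.snoc g v, Fin.lastCases (by simpa using hvL) (by simpa using hgL), ?_⟩
    intro i j hij
    induction i using Fin.lastCases <;> induction j using Fin.lastCases
    · exact absurd rfl hij
    · simpa using (hgv _).symm
    · simpa using hgv _
    · simpa using hgadj (ne_of_apply_ne Fin.castSucc hij)

lemma IsTemplate.le_cliqueNum [Finite V] {s : ℕ} {L0 : Set V} {k : ℕ} {L : Fin k → Set V}
    (hT : IsTemplate G s L0 L) (hω : 2 ≤ G.cliqueNum) : k ≤ G.cliqueNum := by
  classical
  obtain ⟨-, -, -, -, hcard, hnon⟩ := hT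
  set ω := G.cliqueNum
  by_contra! hk
  have hsize : ω * ω ^ (s + 3) < ω ^ (s + 5) := by
    rw [← pow_succ', pow_lt_pow_iff_right₀ (by omega)]
    omega
  obtain ⟨g, -, hg⟩ := exists_adj_transversal (G := G) (L ∘ Fin.castLE hk)
    (fun i j hij => hnon _ _ (Fin.castLE_injective _ |>.ne hij))
    (fun i => hsize.trans_le (hcard _).1)
  have hinj : Function.Injective g := fun i j h => by_contra fun hij => (hg hij).ne h
  have hclique : G.IsClique (Finset.univ.image g : Set V) := by
    rintro _ ha _ hb hab
    simp only [Finset.coe_image, Finset.coe_univ, Set.image_univ, Set.mem_range] at ha hb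
    obtain ⟨i, rfl⟩ := ha
    obtain ⟨j, rfl⟩ := hb
    exact hg (ne_of_apply_ne g hab)
  have := hclique.card_le_cliqueNum
  rw [Finset.card_image_of_injective _ hinj, Finset.card_univ, Fintype.card_fin] at this
  omega

lemma two_le_cliqueNum_of_adj [Finite V] {u w : V} (h : G.Adj u w) : 2 ≤ G.cliqueNum := by
  classical
  have hcl : G.IsClique (({u, w} : Finset V) : Set V) := by
    rw [Finset.coe_pair]
    exact G.isClique_pair.2 fun _ => h
  simpa [Finset.card_pair h.ne] using hcl.card_le_cliqueNum

/-- `u` together with the stable set `S = insert w E` of its neighbours, as in the definition of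
a pendant vertex. -/
structure IsPendantFrame (G : SimpleGraph V) (u w : V) (E : Finset V) : Prop where
  adj : G.Adj u w
  adj_of_mem : ∀ z ∈ E, G.Adj u z
  notMem : w ∉ E
  isStableSet : IsStableSet G (insert w (E : Set V))

structure IsPendantTo (G : SimpleGraph V) (v u w : V) (E : Finset V) : Prop
    extends IsPendantFrame G u w E where
  adj_w : G.Adj v w
  not_adj_u : ¬ G.Adj v u
  not_adj_of_mem : ∀ z ∈ E, ¬ G.Adj v z

lemma TemplatePendant.exists_isPendantTo {s k : ℕ} {L : Fin k → Set V} {v : V}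
    (h : TemplatePendant G s L v) :
    ∃ i j, ∃ u ∈ L j, ∃ w ∈ L i, ∃ E : Finset V,
      ↑E ⊆ L i ∧ #E = s ∧ IsPendantTo G v u w E := by
  classical
  obtain ⟨i, j, -, u, hu, S, hSL, hScard, hSst, huS, hvu, hone⟩ := h
  obtain ⟨w, hw⟩ := Set.ncard_eq_one.1 hone
  have hwS : w ∈ S ∧ G.Adj v w := (Set.ext_iff.1 hw w).2 rfl
  have hSfin : S.Finite := Set.finite_of_ncard_ne_zero (by omega)
  refine ⟨i, j, u, hu, w, hSL hwS.1, hSfin.toFinset.erase w, ?_, ?_, ?_⟩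
  · exact fun z hz => hSL (hSfin.mem_toFinset.1 (Finset.mem_of_mem_erase hz))
  · rw [Finset.card_erase_of_mem (hSfin.mem_toFinset.2 hwS.1),
      ← Set.ncard_eq_toFinset_card _ hSfin, hScard, Nat.add_sub_cancel]
  · have hE : ((hSfin.toFinset.erase w : Finset V) : Set V) = S \ {w} := by simp
    refine ⟨⟨huS w hwS.1, fun z hz => huS z ?_, by simp, ?_⟩, hwS.2, hvu,
      fun z hz hvz => ?_⟩
    · exact hSfin.mem_toFinset.1 (Finset.mem_of_mem_erase hz)
    · rwa [hE, Set.insert_sdiff_singleton, Set.insert_eq_of_mem hwS.1]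
    · rw [Finset.mem_erase, hSfin.mem_toFinset] at hz
      exact hz.1 ((Set.ext_iff.1 hw z).1 ⟨hz.2, hvz⟩)

lemma IsPendantFrame.not_isStableSet_of_isPendantTo {s : ℕ}
    (hfree : IsInducedFree G (doubleStarGraph s)) {u w : V} {E Y : Finset V}
    (hframe : IsPendantFrame G u w E) (hE : #E = s) (hY : #Y = s) (huY : u ∉ Y)
    (hYp : ∀ v ∈ Y, IsPendantTo G v u w E) : ¬ IsStableSet G Y := by
  intro hYst
  set x : Fin s → V := fun r => (E.equivFinOfCardEq hE).symm r
  set y : Fin s → V := fun r => (Y.equivFinOfCardEq hY).symm r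
  have hxE : ∀ r, x r ∈ E := fun r => ((E.equivFinOfCardEq hE).symm r).2
  have hyY : ∀ r, y r ∈ Y := fun r => ((Y.equivFinOfCardEq hY).symm r).2
  have hxx : ∀ r r', ¬ G.Adj (x r) (x r') := fun r r' h => hframe.isStableSet _
    (Set.mem_insert_of_mem _ (hxE r)) _ (Set.mem_insert_of_mem _ (hxE r')) h.ne h
  refine hfree.not_isIndContained <| doubleStarGraph_isIndContained
    (Subtype.val_injective.comp (Equiv.injective _))
    (Subtype.val_injective.comp (Equiv.injective _))
    hframe.adj (fun r => hframe.adj_of_mem _ (hxE r)) (fun r => (hYp _ (hyY r)).adj_w.symm)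
    (fun r h => hframe.isStableSet _ (Set.mem_insert _ _) _
      (Set.mem_insert_of_mem _ (hxE r)) h.ne h)
    (fun r h => (hYp _ (hyY r)).not_adj_u h.symm) hxx
    (fun r r' h => hYst _ (hyY r) _ (hyY r') h.ne h)
    (fun r r' h => (hYp _ (hyY r')).not_adj_of_mem _ (hxE r) h.symm)
    (fun r h => hframe.notMem (h ▸ hxE r)) (fun r h => huY (h ▸ hyY r))

lemma ncard_setOf_isPendantTo_lt [Finite V] {s : ℕ}
    (hfree : IsInducedFree G (doubleStarGraph s)) (hω : 2 ≤ G.cliqueNum) {u w : V}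
    {E : Finset V} (hE : #E = s) {N : Set V} (huN : u ∉ N) :
    {v ∈ N | IsPendantTo G v u w E}.ncard < G.cliqueNum ^ s := by
  classical
  set F := {v ∈ N | IsPendantTo G v u w E}
  obtain hF | ⟨v₀, hv₀⟩ := F.eq_empty_or_nonempty
  · rw [hF, Set.ncard_empty]
    exact pow_pos (by omega) _
  have hFfin : F.Finite := Set.toFinite F
  rw [Set.ncard_eq_toFinset_card F hFfin]
  refine card_lt_pow_of_isStableSet_of_isClique hω ?_ fun C _ hC => hC.card_le_cliqueNum
  intro T hTF hTst
  by_contra! hT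
  obtain ⟨Y, hYT, hY⟩ := Finset.exists_subset_card_eq hT
  have hYF : ∀ v ∈ Y, v ∈ F := fun v hv => hFfin.mem_toFinset.1 (hTF (hYT hv))
  exact hv₀.2.toIsPendantFrame.not_isStableSet_of_isPendantTo hfree hE hY
    (fun hu => huN (hYF u hu).1) (fun v hv => (hYF v hv).2)
    (fun a ha b hb => hTst a (hYT ha) b (hYT hb))

lemma TemplatePendant.two_le_cliqueNum [Finite V] {s k : ℕ} {L : Fin k → Set V} {v : V}
    (h : TemplatePendant G s L v) : 2 ≤ G.cliqueNum :=
  let ⟨_, _, _, _, _, _, _, _, _, hv⟩ := h.exists_isPendantTo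
  two_le_cliqueNum_of_adj hv.adj

open Classical in
noncomputable def templateFrames [Fintype V] (s : ℕ) {k : ℕ} (L : Fin k → Set V) :
    Finset (V × V × Finset V) :=
  (Finset.univ.biUnion fun j => (L j).toFinset) ×ˢ
    Finset.univ.biUnion fun i => (L i).toFinset ×ˢ (L i).toFinset.powersetCard s

lemma mem_templateFrames [Fintype V] {s k : ℕ} {L : Fin k → Set V} {u w : V} {E : Finset V} :
    (u, w, E) ∈ templateFrames s L ↔
      (∃ j, u ∈ L j) ∧ ∃ i, w ∈ L i ∧ ↑E ⊆ L i ∧ #E = s := by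
  simp [templateFrames, Set.subset_def]

lemma card_templateFrames_le [Fintype V] {s k M : ℕ} {L : Fin k → Set V}
    (hL : ∀ i, (L i).ncard ≤ M) : #(templateFrames s L) ≤ k * M * (k * (M * M ^ s)) := by
  classical
  have hL' : ∀ i, #(L i).toFinset ≤ M := fun i => by
    rw [← Set.ncard_eq_toFinset_card']; exact hL i
  rw [templateFrames, Finset.card_product]
  refine Nat.mul_le_mul ?_ ?_
  · refine (Finset.card_biUnion_le_card_mul _ _ M fun i _ => ?_).trans (by simp)
    convert hL' i
  · refine (Finset.card_biUnion_le_card_mul _ _ (M * M ^ s) fun i _ => ?_).trans (by simp)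
    rw [Finset.card_product, Finset.card_powersetCard]
    have hLi : #(L i).toFinset ≤ M := by convert hL' i
    exact Nat.mul_le_mul hLi ((Nat.choose_le_pow _ _).trans (Nat.pow_le_pow_left hLi _))

lemma ncard_templatePendant_le [Fintype V] {s : ℕ}
    (hfree : IsInducedFree G (doubleStarGraph s)) (hω : 2 ≤ G.cliqueNum)
    {L0 : Set V} {k : ℕ} {L : Fin k → Set V} :
    {v ∈ templateNbhd G L0 L | TemplatePendant G s L v}.ncard
      ≤ #(templateFrames s L) * G.cliqueNum ^ s := by
  set fiber : V × V × Finset V → Set V :=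
    fun d => {v ∈ templateNbhd G L0 L | IsPendantTo G v d.1 d.2.1 d.2.2}
  have hcover : {v ∈ templateNbhd G L0 L | TemplatePendant G s L v} ⊆
      ⋃ d ∈ templateFrames s L, fiber d := by
    rintro v ⟨hvN, hv⟩
    obtain ⟨i, j, u, hu, w, hw, E, hEL, hE, hvE⟩ := hv.exists_isPendantTo
    exact Set.mem_biUnion (mem_templateFrames.2 ⟨⟨j, hu⟩, i, hw, hEL, hE⟩) ⟨hvN, hvE⟩
  have hfiber : ∀ d ∈ templateFrames s L, (fiber d).ncard ≤ G.cliqueNum ^ s := by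
    rintro ⟨u, w, E⟩ hd
    obtain ⟨⟨j, hu⟩, -, -, -, hE⟩ := mem_templateFrames.1 hd
    exact (ncard_setOf_isPendantTo_lt hfree hω hE fun h =>
      h.1 (Or.inr (Set.mem_iUnion.2 ⟨j, hu⟩))).le
  exact (Set.ncard_le_ncard hcover).trans <| (Finset.set_ncard_biUnion_le _ _).trans <|
    Finset.sum_le_card_nsmul _ _ _ hfiber

end

theorem template_few_pendant_general {V : Type*} [Fintype V] (G : SimpleGraph V) (s : ℕ)
    (hfree : IsInducedFree G (doubleStarGraph s))
    (L0 : Set V) (k : ℕ) (L : Fin k → Set V) (hT : IsOptimalTemplate G s L0 L) :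
    ({v ∈ templateNbhd G L0 L | TemplatePendant G s L v}).ncard
      ≤ 14 ^ (s+2) * G.cliqueNum ^ (s*s + 9*s + 14) := by
  obtain hP | ⟨v₀, hv₀⟩ :=
    ({v ∈ templateNbhd G L0 L | TemplatePendant G s L v}).eq_empty_or_nonempty
  · simp [hP]
  have hω := hv₀.2.two_le_cliqueNum
  obtain ⟨hT, -⟩ := hT
  have hk := hT.le_cliqueNum hω
  set M := 14 * G.cliqueNum ^ (s + 6)
  calc _ ≤ #(templateFrames s L) * G.cliqueNum ^ s := ncard_templatePendant_le hfree hω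
    _ ≤ k * M * (k * (M * M ^ s)) * G.cliqueNum ^ s :=
        Nat.mul_le_mul_right _ (card_templateFrames_le fun i => (hT.2.2.2.2.1 i).2)
    _ ≤ G.cliqueNum * M * (G.cliqueNum * (M * M ^ s)) * G.cliqueNum ^ s := by gcongr
    _ = 14 ^ (s+2) * G.cliqueNum ^ (s*s + 9*s + 14) := by ring

/-- If `G` is `H_s`-free and `𝓛` is an optimal `s`-template, then at most
`14^{s+2} ω^{s²+9s+14}` vertices of `N(𝓛)` are pendant. -/
theorem template_few_pendant {V : Type*} [Fintype V] (G : SimpleGraph V) (s : ℕ) (hs : 1 ≤ s)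
    (hfree : IsInducedFree G (doubleStarGraph s))
    (L0 : Set V) (k : ℕ) (L : Fin k → Set V) (hT : IsOptimalTemplate G s L0 L) :
    ({v ∈ templateNbhd G L0 L | TemplatePendant G s L v}).ncard
      ≤ 14 ^ (s+2) * G.cliqueNum ^ (s*s + 9*s + 14) :=
  template_few_pendant_general G s hfree L0 k L hT
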